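/- Fix π₀ ∈ (0,1), 0 ≤ λ < α < 1, a constant c > 0, a measurable nonincreasing function μ : [0,1] → [0,∞) with c·μ(p) ≤ 1 for all p, and a measurable nonnegative f₁ : [0,1] → [0,∞) with ∫₀¹ f₁(t) dt = 1. Set f(t) = π₀ + (1−π₀) f₁(t) and assume ∫₀^α μ(t) f(t) dt > 0. Let (H_1, P_1, δ_1), ..., (H_m, P_m, δ_m) be i.i.d. with common law ν on {0,1} × [0,1] × {0,1} having density g(h,p,d) = [π₀·1{h=0} + (1−π₀)·f₁(p)·1{h=1}] · (c·μ(p))^d · (1 − c·μ(p))^{1−d} with respect to the product of counting, Lebesgue, and counting measures. Define FDR̂ = (α/(α−λ)) · (Σ 1_{(λ,α]}(P_i) δ_i) / (Σ 1_{[0,α]}(P_i) δ_i). Then E[FDR̂ | Σ 1_{[0,α]}(P_i) δ_i > 0] − Pr(H_1 = 0 | δ_1 = 1, P_1 ≤ α) = [ (α/(α−λ)) ∫_λ^α μ(t) f(t) dt − π₀ ∫₀^α μ(t) dt ] / ∫₀^α μ(t) f(t) dt. -/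

import Mathlib

/-!
Let `N = ∑ᵢ δᵢ 1{Pᵢ ≤ α}` and `Tᵢ = N - δᵢ 1{Pᵢ ≤ α}`. Whenever `i` is counted in the numerator
`∑ᵢ δᵢ 1{λ < Pᵢ ≤ α}` it is counted in `N`, so there `N = 1 + Tᵢ`, and `Tᵢ` is independent of
`(Hᵢ, Pᵢ, δᵢ)`. Hence `E[FDR̂; N > 0] = α/(α-λ) · Pr(λ < P ≤ α, δ = 1) · K` with
`K = ∑ᵢ E[(1 + Tᵢ)⁻¹]`, and the same computation with the numerator replaced by `N` gives
`Pr(N > 0) = Pr(P ≤ α, δ = 1) · K`. The unknown `K` cancels in the conditional expectation,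
leaving a ratio of two probabilities under the common law, which are integrals of its density.
-/

open MeasureTheory ProbabilityTheory Finset
open scoped ENNReal

theorem Finset.sum_div_sum_eq_sum_div_one_add_sum_erase {ι K : Type*} [DecidableEq ι] [Field K]
    (s : Finset ι) (a b : ι → K) (hab : ∀ i ∈ s, a i ≠ 0 → b i = 1) :
    (∑ i ∈ s, a i) / ∑ i ∈ s, b i = ∑ i ∈ s, a i / (1 + ∑ j ∈ s.erase i, b j) := by
  rw [sum_div]
  refine sum_congr rfl fun i hi => ?_
  by_cases ha : a i = 0
  · simp [ha]
  · rw [← hab i hi ha, add_sum_erase s b hi]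

theorem Set.Iic_inter_Icc_of_le {α : Type*} [Preorder α] {a b c : α} (h : b ≤ c) :
    Set.Iic b ∩ Set.Icc a c = Set.Icc a b :=
  Set.ext fun _ => ⟨fun hx => ⟨hx.2.1, hx.1⟩, fun hx => ⟨hx.2, hx.1, hx.2.trans h⟩⟩

section Probability

variable {Ω β ι : Type*} [MeasurableSpace Ω] [MeasurableSpace β] {P : Measure Ω}

theorem ProbabilityTheory.iIndepFun.indepFun_sum_comp_of_notMem {X : ι → Ω → β}
    (hX : iIndepFun X P) (hXm : ∀ i, Measurable (X i)) {g : β → ℝ} (hg : Measurable g)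
    {s : Finset ι} {i : ι} (hi : i ∉ s) :
    IndepFun (X i) (fun ω => ∑ j ∈ s, g (X j ω)) P := by
  have h := (hX.indepFun_finset {i} s (disjoint_singleton_left.2 hi) hXm).comp
    (measurable_pi_apply ⟨i, mem_singleton_self i⟩)
    (Finset.measurable_sum univ fun j _ => hg.comp (measurable_pi_apply j))
  convert h using 1
  · rfl
  · exact funext fun ω => (sum_coe_sort s fun j => g (X j ω)).symm

theorem integral_ite_comp_eq_measureReal_map [IsFiniteMeasure P] {X : Ω → β} (hX : Measurable X)
    {p : β → Prop} [DecidablePred p] (hp : MeasurableSet {x | p x}) :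
    ∫ ω, (if p (X ω) then (1 : ℝ) else 0) ∂P = (P.map X).real {x | p x} := by
  rw [map_measureReal_apply hX hp, ← integral_indicator_one (hp.preimage hX)]
  congr 1 with ω
  simp [Set.indicator_apply]

theorem ProbabilityTheory.toReal_cond_preimage {X : Ω → β} (hX : Measurable X)
    {s t : Set β} (hs : MeasurableSet s) (ht : MeasurableSet t) :
    (P[X ⁻¹' t | X ⁻¹' s]).toReal = (P.map X).real (s ∩ t) / (P.map X).real s := by
  rw [cond_apply (hs.preimage hX), ← Set.preimage_inter, ENNReal.toReal_mul, ENNReal.toReal_inv,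
    map_measureReal_apply hX hs, map_measureReal_apply hX (hs.inter ht), div_eq_inv_mul,
    measureReal_def, measureReal_def]

theorem integral_cond_of_forall_compl_eq_zero {s : Set Ω} {F : Ω → ℝ}
    (hF : ∀ ω ∉ s, F ω = 0) : ∫ ω, F ω ∂P[|s] = (P.real s)⁻¹ * ∫ ω, F ω ∂P := by
  rw [ProbabilityTheory.cond, integral_smul_measure,
    setIntegral_eq_integral_of_forall_compl_eq_zero hF, ENNReal.toReal_inv, smul_eq_mul,
    measureReal_def]

section SelectedProportion

variable [Fintype ι] [DecidableEq ι] [IsProbabilityMeasure P] {X : ι → Ω → β}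
  {ν : Measure β} {p q : β → Prop} [DecidablePred p] [DecidablePred q]

theorem integral_sum_ite_div_sum_ite (hX : iIndepFun X P) (hXm : ∀ i, Measurable (X i))
    (hlaw : ∀ i, P.map (X i) = ν) (hp : MeasurableSet {x | p x})
    (hq : MeasurableSet {x | q x}) (hpq : ∀ x, p x → q x) :
    ∫ ω, (∑ i, if p (X i ω) then (1 : ℝ) else 0) / ∑ i, (if q (X i ω) then (1 : ℝ) else 0) ∂P
      = ν.real {x | p x} *
        ∑ i, ∫ ω, (1 + ∑ j ∈ univ.erase i, if q (X j ω) then (1 : ℝ) else 0)⁻¹ ∂P := by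
  have hpm : Measurable fun x => if p x then (1 : ℝ) else 0 :=
    Measurable.ite hp measurable_const measurable_const
  have hqm : Measurable fun x => if q x then (1 : ℝ) else 0 :=
    Measurable.ite hq measurable_const measurable_const
  have hinvm : Measurable fun t : ℝ => (1 + t)⁻¹ := (measurable_const.add measurable_id).inv
  have hterm : ∀ i, ∫ ω, (if p (X i ω) then (1 : ℝ) else 0) *
        (1 + ∑ j ∈ univ.erase i, if q (X j ω) then (1 : ℝ) else 0)⁻¹ ∂P
      = ν.real {x | p x} *
        ∫ ω, (1 + ∑ j ∈ univ.erase i, if q (X j ω) then (1 : ℝ) else 0)⁻¹ ∂P := by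
    intro i
    have hind := (hX.indepFun_sum_comp_of_notMem hXm hqm (notMem_erase i univ)).comp hpm hinvm
    refine (hind.integral_fun_mul_eq_mul_integral (hpm.comp (hXm i)).aestronglyMeasurable
      (hinvm.comp (Finset.measurable_sum _ fun j _ => hqm.comp (hXm j))).aestronglyMeasurable).trans
      ?_
    rw [← hlaw i, ← integral_ite_comp_eq_measureReal_map (hXm i) hp]
    rfl
  have hint : ∀ i, Integrable (fun ω => (if p (X i ω) then (1 : ℝ) else 0) *
      (1 + ∑ j ∈ univ.erase i, if q (X j ω) then (1 : ℝ) else 0)⁻¹) P := fun i => by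
    refine Integrable.of_bound ((hpm.comp (hXm i)).mul (hinvm.comp
      (Finset.measurable_sum _ fun j _ => hqm.comp (hXm j)))).aestronglyMeasurable 1
      (ae_of_all _ fun ω => ?_)
    have hT : 0 ≤ ∑ j ∈ univ.erase i, if q (X j ω) then (1 : ℝ) else 0 :=
      sum_nonneg fun j _ => by split_ifs <;> norm_num
    rw [norm_mul, norm_inv, Real.norm_of_nonneg (by positivity : (0 : ℝ) ≤ 1 + _)]
    exact mul_le_one₀ (by split_ifs <;> norm_num) (by positivity)
      (inv_le_one_of_one_le₀ (by linarith))
  have hsel : ∀ ω i, (if p (X i ω) then (1 : ℝ) else 0) ≠ 0 →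
      (if q (X i ω) then (1 : ℝ) else 0) = 1 :=
    fun ω i h => if_pos (hpq _ (ite_ne_right_iff.1 h).1)
  simp_rw [sum_div_sum_eq_sum_div_one_add_sum_erase _ _ _ fun i _ => hsel _ i, div_eq_mul_inv]
  rw [integral_finsetSum _ fun i _ => hint i, mul_sum]
  exact sum_congr rfl fun i _ => hterm i

theorem integral_cond_sum_ite_div_sum_ite [Nonempty ι] (hX : iIndepFun X P)
    (hXm : ∀ i, Measurable (X i)) (hlaw : ∀ i, P.map (X i) = ν) (hp : MeasurableSet {x | p x})
    (hq : MeasurableSet {x | q x}) (hpq : ∀ x, p x → q x) (hνq : ν {x | q x} ≠ 0) :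
    ∫ ω, (∑ i, if p (X i ω) then (1 : ℝ) else 0) / ∑ i, (if q (X i ω) then (1 : ℝ) else 0)
        ∂P[|{ω | 0 < ∑ i, if q (X i ω) then (1 : ℝ) else 0}]
      = ν.real {x | p x} / ν.real {x | q x} := by
  have hq1 : Measurable fun x => if q x then (1 : ℝ) else 0 :=
    Measurable.ite hq measurable_const measurable_const
  have hC : MeasurableSet {ω | 0 < ∑ i, if q (X i ω) then (1 : ℝ) else 0} :=
    measurableSet_lt measurable_const (Finset.measurable_sum _ fun i _ => hq1.comp (hXm i))
  have hN0 : ∀ ω, ¬ 0 < ∑ i, (if q (X i ω) then (1 : ℝ) else 0) →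
      ∑ i, (if q (X i ω) then (1 : ℝ) else 0) = 0 := fun ω hω =>
    le_antisymm (not_lt.1 hω) (sum_nonneg fun i _ => by split_ifs <;> norm_num)
  have hPC : P.real {ω | 0 < ∑ i, if q (X i ω) then (1 : ℝ) else 0} = ν.real {x | q x} *
      ∑ i, ∫ ω, (1 + ∑ j ∈ univ.erase i, if q (X j ω) then (1 : ℝ) else 0)⁻¹ ∂P := by
    rw [← integral_sum_ite_div_sum_ite hX hXm hlaw hq hq fun _ => id, ← integral_indicator_one hC]
    congr 1 with ω
    by_cases hω : 0 < ∑ i, if q (X i ω) then (1 : ℝ) else 0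
    · rw [Set.indicator_of_mem (show ω ∈ _ from hω), Pi.one_apply, div_self hω.ne']
    · rw [Set.indicator_of_notMem (show ω ∉ _ from hω), hN0 ω hω, div_zero]
  have hPC0 : P.real {ω | 0 < ∑ i, if q (X i ω) then (1 : ℝ) else 0} ≠ 0 := by
    obtain ⟨i⟩ := ‹Nonempty ι›
    rw [← hlaw i, Measure.map_apply (hXm i) hq] at hνq
    refine (measureReal_ne_zero_iff (measure_ne_top _ _)).2 fun h0 =>
      hνq (measure_mono_null (fun ω hω => ?_) h0)
    calc (0 : ℝ) < 1 := one_pos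
      _ = if q (X i ω) then (1 : ℝ) else 0 := (if_pos hω).symm
      _ ≤ ∑ j, if q (X j ω) then (1 : ℝ) else 0 :=
        single_le_sum (f := fun j => if q (X j ω) then (1 : ℝ) else 0)
          (fun j _ => by split_ifs <;> norm_num) (mem_univ i)
  -- The ratio vanishes off the conditioning event only because `x / 0 = 0`.
  rw [integral_cond_of_forall_compl_eq_zero fun ω hω => by rw [hN0 ω hω, div_zero],
    integral_sum_ite_div_sum_ite hX hXm hlaw hp hq hpq, hPC, inv_mul_eq_div,
    mul_div_mul_right _ _ (right_ne_zero_of_mul (hPC ▸ hPC0))]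

end SelectedProportion

end Probability

theorem lintegral_count_prod_prod_count {α κ τ : Type*} [MeasurableSpace α]
    [Fintype κ] [MeasurableSpace κ] [MeasurableSingletonClass κ]
    [Fintype τ] [MeasurableSpace τ] [MeasurableSingletonClass τ]
    (ρ : Measure α) [SFinite ρ] {F : κ × α × τ → ℝ≥0∞} (hF : Measurable F) :
    ∫⁻ x, F x ∂(Measure.count.prod (ρ.prod Measure.count)) = ∫⁻ a, ∑ h, ∑ d, F (h, a, d) ∂ρ := by
  have hsection : ∀ h, ∫⁻ y, F (h, y) ∂(ρ.prod Measure.count) = ∫⁻ a, ∑ d, F (h, a, d) ∂ρ :=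
    fun h => by
      rw [lintegral_prod (fun y => F (h, y)) (hF.comp measurable_prodMk_left).aemeasurable]
      simp only [lintegral_count, tsum_fintype]
  rw [lintegral_prod _ hF.aemeasurable, lintegral_count, tsum_fintype, lintegral_finsetSum]
  · exact sum_congr rfl fun h _ => hsection h
  · exact fun h _ => Finset.measurable_sum _ fun d _ => hF.comp (by fun_prop)

def mixtureDensity (π₀ : ℝ) (f₁ : ℝ → ℝ) (t : ℝ) : ℝ := π₀ + (1 - π₀) * f₁ t

/-- `H = 0` marks a true null hypothesis and `δ = 1` a selected p-value, selected with
probability `c μ(P)`. -/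
def selectionDensity (π₀ c : ℝ) (μ f₁ : ℝ → ℝ) (x : Fin 2 × ℝ × Fin 2) : ℝ :=
  (if x.1 = 0 then π₀ else (1 - π₀) * f₁ x.2.1) *
    (if x.2.2 = 1 then c * μ x.2.1 else 1 - c * μ x.2.1)

noncomputable def selectionLaw (π₀ c : ℝ) (μ f₁ : ℝ → ℝ) : Measure (Fin 2 × ℝ × Fin 2) :=
  ((Measure.count : Measure (Fin 2)).prod
    ((volume.restrict (Set.Icc (0 : ℝ) 1)).prod (Measure.count : Measure (Fin 2)))).withDensity
    fun x => ENNReal.ofReal (selectionDensity π₀ c μ f₁ x)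

section SelectionLaw

variable {π₀ c : ℝ} {μ f₁ : ℝ → ℝ}

theorem measurable_selectionDensity (hμ : Measurable μ) (hf₁ : Measurable f₁) :
    Measurable (selectionDensity π₀ c μ f₁) := by
  unfold selectionDensity
  refine Measurable.mul ?_ ?_ <;> refine Measurable.ite ?_ (by fun_prop) (by fun_prop)
  · exact measurableSet_eq_fun measurable_fst measurable_const
  · exact measurableSet_eq_fun (measurable_snd.comp measurable_snd) measurable_const

theorem selectionLaw_apply (hμ : Measurable μ) (hf₁ : Measurable f₁)
    {S : Set (Fin 2 × ℝ × Fin 2)} (hS : MeasurableSet S) :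
    selectionLaw π₀ c μ f₁ S = ∫⁻ p in Set.Icc 0 1,
      ∑ h, ∑ d, S.indicator (fun x => ENNReal.ofReal (selectionDensity π₀ c μ f₁ x)) (h, p, d) := by
  rw [selectionLaw, withDensity_apply _ hS, ← lintegral_indicator hS,
    lintegral_count_prod_prod_count _
      ((measurable_selectionDensity hμ hf₁).ennreal_ofReal.indicator hS)]

theorem selectionLaw_real_selected (hπ₀ : 0 ≤ π₀) (hπ₁ : π₀ ≤ 1) (hc : 0 ≤ c)
    (hμ : Measurable μ) (hf₁ : Measurable f₁) (hμ0 : ∀ p ∈ Set.Icc (0 : ℝ) 1, 0 ≤ μ p)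
    (hf₁0 : ∀ p ∈ Set.Icc (0 : ℝ) 1, 0 ≤ f₁ p) {s : Set ℝ} (hs : MeasurableSet s) :
    (selectionLaw π₀ c μ f₁).real {x | x.2.1 ∈ s ∧ x.2.2 = 1}
      = c * ∫ p in s ∩ Set.Icc 0 1, μ p * mixtureDensity π₀ f₁ p := by
  have hnull : ∀ p ∈ Set.Icc (0 : ℝ) 1, 0 ≤ π₀ * (c * μ p) := fun p hp =>
    mul_nonneg hπ₀ (mul_nonneg hc (hμ0 p hp))
  have halt : ∀ p ∈ Set.Icc (0 : ℝ) 1, 0 ≤ (1 - π₀) * f₁ p * (c * μ p) := fun p hp =>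
    mul_nonneg (mul_nonneg (sub_nonneg.2 hπ₁) (hf₁0 p hp)) (mul_nonneg hc (hμ0 p hp))
  have hsplit : ∀ p, c * (μ p * mixtureDensity π₀ f₁ p)
      = π₀ * (c * μ p) + (1 - π₀) * f₁ p * (c * μ p) := fun p => by
    rw [mixtureDensity]; ring
  have hpt : ∀ p ∈ Set.Icc (0 : ℝ) 1,
      ∑ h, ∑ d, {x : Fin 2 × ℝ × Fin 2 | x.2.1 ∈ s ∧ x.2.2 = 1}.indicator
        (fun x => ENNReal.ofReal (selectionDensity π₀ c μ f₁ x)) (h, p, d)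
      = s.indicator (fun p => ENNReal.ofReal (c * (μ p * mixtureDensity π₀ f₁ p))) p := by
    intro p hp
    by_cases hps : p ∈ s
    · simp [Set.indicator, hps, selectionDensity, hsplit,
        ENNReal.ofReal_add (hnull p hp) (halt p hp)]
    · simp [hps]
  rw [measureReal_def, selectionLaw_apply hμ hf₁ (by measurability),
    setLIntegral_congr_fun measurableSet_Icc hpt, lintegral_indicator hs,
    Measure.restrict_restrict hs, ← integral_eq_lintegral_of_nonneg_ae, integral_const_mul]
  · refine (ae_restrict_iff' (hs.inter measurableSet_Icc)).2 (ae_of_all _ fun p hp => ?_)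
    show 0 ≤ c * (μ p * mixtureDensity π₀ f₁ p)
    rw [hsplit]
    exact add_nonneg (hnull p hp.2) (halt p hp.2)
  · exact (by unfold mixtureDensity; fun_prop :
      Measurable fun p => c * (μ p * mixtureDensity π₀ f₁ p)).aestronglyMeasurable

theorem selectionLaw_real_null_selected (hπ₀ : 0 ≤ π₀) (hc : 0 ≤ c) (hμ : Measurable μ)
    (hf₁ : Measurable f₁) (hμ0 : ∀ p ∈ Set.Icc (0 : ℝ) 1, 0 ≤ μ p) {s : Set ℝ}
    (hs : MeasurableSet s) :
    (selectionLaw π₀ c μ f₁).real {x | x.1 = 0 ∧ x.2.1 ∈ s ∧ x.2.2 = 1}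
      = π₀ * c * ∫ p in s ∩ Set.Icc 0 1, μ p := by
  have hpt : ∀ p, ∑ h, ∑ d, {x : Fin 2 × ℝ × Fin 2 | x.1 = 0 ∧ x.2.1 ∈ s ∧ x.2.2 = 1}.indicator
        (fun x => ENNReal.ofReal (selectionDensity π₀ c μ f₁ x)) (h, p, d)
      = s.indicator (fun p => ENNReal.ofReal (π₀ * c * μ p)) p := by
    intro p
    by_cases hps : p ∈ s
    · simp [Set.indicator, hps, selectionDensity, mul_assoc]
    · simp [hps]
  rw [measureReal_def, selectionLaw_apply hμ hf₁ (by measurability), lintegral_congr hpt,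
    lintegral_indicator hs, Measure.restrict_restrict hs, ← integral_eq_lintegral_of_nonneg_ae,
    integral_const_mul]
  · exact (ae_restrict_iff' (hs.inter measurableSet_Icc)).2
      (ae_of_all _ fun p hp => mul_nonneg (mul_nonneg hπ₀ hc) (hμ0 p hp.2))
  · exact (measurable_const.mul hμ).aestronglyMeasurable

theorem selectionLaw_real_selected_Ioc (hπ₀ : 0 ≤ π₀) (hπ₁ : π₀ ≤ 1) (hc : 0 ≤ c)
    (hμ : Measurable μ) (hf₁ : Measurable f₁) (hμ0 : ∀ p ∈ Set.Icc (0 : ℝ) 1, 0 ≤ μ p)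
    (hf₁0 : ∀ p ∈ Set.Icc (0 : ℝ) 1, 0 ≤ f₁ p) {a b : ℝ} (ha : 0 ≤ a) (hab : a ≤ b)
    (hb : b ≤ 1) :
    (selectionLaw π₀ c μ f₁).real {x | a < x.2.1 ∧ x.2.1 ≤ b ∧ x.2.2 = 1}
      = c * ∫ t in a..b, μ t * mixtureDensity π₀ f₁ t := by
  rw [show {x : Fin 2 × ℝ × Fin 2 | a < x.2.1 ∧ x.2.1 ≤ b ∧ x.2.2 = 1}
      = {x | x.2.1 ∈ Set.Ioc a b ∧ x.2.2 = 1} from Set.ext fun _ => and_assoc.symm,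
    selectionLaw_real_selected hπ₀ hπ₁ hc hμ hf₁ hμ0 hf₁0 measurableSet_Ioc,
    Set.inter_eq_left.2 (Set.Ioc_subset_Icc_self.trans (Set.Icc_subset_Icc ha hb)),
    intervalIntegral.integral_of_le hab]

theorem selectionLaw_real_selected_Icc (hπ₀ : 0 ≤ π₀) (hπ₁ : π₀ ≤ 1) (hc : 0 ≤ c)
    (hμ : Measurable μ) (hf₁ : Measurable f₁) (hμ0 : ∀ p ∈ Set.Icc (0 : ℝ) 1, 0 ≤ μ p)
    (hf₁0 : ∀ p ∈ Set.Icc (0 : ℝ) 1, 0 ≤ f₁ p) {b : ℝ} (hb₀ : 0 ≤ b) (hb : b ≤ 1) :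
    (selectionLaw π₀ c μ f₁).real {x | 0 ≤ x.2.1 ∧ x.2.1 ≤ b ∧ x.2.2 = 1}
      = c * ∫ t in 0..b, μ t * mixtureDensity π₀ f₁ t := by
  rw [show {x : Fin 2 × ℝ × Fin 2 | 0 ≤ x.2.1 ∧ x.2.1 ≤ b ∧ x.2.2 = 1}
      = {x | x.2.1 ∈ Set.Icc 0 b ∧ x.2.2 = 1} from Set.ext fun _ => and_assoc.symm,
    selectionLaw_real_selected hπ₀ hπ₁ hc hμ hf₁ hμ0 hf₁0 measurableSet_Icc,
    Set.inter_eq_left.2 (Set.Icc_subset_Icc le_rfl hb), integral_Icc_eq_integral_Ioc,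
    intervalIntegral.integral_of_le hb₀]

theorem selectionLaw_real_selected_Iic (hπ₀ : 0 ≤ π₀) (hπ₁ : π₀ ≤ 1) (hc : 0 ≤ c)
    (hμ : Measurable μ) (hf₁ : Measurable f₁) (hμ0 : ∀ p ∈ Set.Icc (0 : ℝ) 1, 0 ≤ μ p)
    (hf₁0 : ∀ p ∈ Set.Icc (0 : ℝ) 1, 0 ≤ f₁ p) {b : ℝ} (hb₀ : 0 ≤ b) (hb : b ≤ 1) :
    (selectionLaw π₀ c μ f₁).real {x | x.2.2 = 1 ∧ x.2.1 ≤ b}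
      = c * ∫ t in 0..b, μ t * mixtureDensity π₀ f₁ t := by
  rw [show {x : Fin 2 × ℝ × Fin 2 | x.2.2 = 1 ∧ x.2.1 ≤ b}
      = {x | x.2.1 ∈ Set.Iic b ∧ x.2.2 = 1} from Set.ext fun _ => and_comm,
    selectionLaw_real_selected hπ₀ hπ₁ hc hμ hf₁ hμ0 hf₁0 measurableSet_Iic,
    Set.Iic_inter_Icc_of_le hb, integral_Icc_eq_integral_Ioc,
    intervalIntegral.integral_of_le hb₀]

theorem selectionLaw_real_null_selected_Iic (hπ₀ : 0 ≤ π₀) (hc : 0 ≤ c) (hμ : Measurable μ)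
    (hf₁ : Measurable f₁) (hμ0 : ∀ p ∈ Set.Icc (0 : ℝ) 1, 0 ≤ μ p) {b : ℝ} (hb₀ : 0 ≤ b)
    (hb : b ≤ 1) :
    (selectionLaw π₀ c μ f₁).real ({x | x.2.2 = 1 ∧ x.2.1 ≤ b} ∩ {x | x.1 = 0})
      = π₀ * c * ∫ t in 0..b, μ t := by
  rw [show {x : Fin 2 × ℝ × Fin 2 | x.2.2 = 1 ∧ x.2.1 ≤ b} ∩ {x | x.1 = 0}
      = {x | x.1 = 0 ∧ x.2.1 ∈ Set.Iic b ∧ x.2.2 = 1} from Set.ext fun _ =>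
        ⟨fun ⟨⟨hδ, hP⟩, hH⟩ => ⟨hH, hP, hδ⟩, fun ⟨hH, hP, hδ⟩ => ⟨⟨hδ, hP⟩, hH⟩⟩,
    selectionLaw_real_null_selected hπ₀ hc hμ hf₁ hμ0 measurableSet_Iic,
    Set.Iic_inter_Icc_of_le hb, integral_Icc_eq_integral_Ioc,
    intervalIntegral.integral_of_le hb₀]

end SelectionLaw

theorem bias_fdr_estimator_general
    {Ω : Type*} [MeasurableSpace Ω] (Pr : Measure Ω) [IsProbabilityMeasure Pr]
    (π₀ lam α c : ℝ) (hπ : π₀ ∈ Set.Ioo (0 : ℝ) 1)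
    (hlam : 0 ≤ lam) (hla : lam < α) (hα : α < 1) (hc : 0 < c)
    (μ : ℝ → ℝ) (hμmeas : Measurable μ)
    (hμnonneg : ∀ p ∈ Set.Icc (0 : ℝ) 1, 0 ≤ μ p)
    (f₁ : ℝ → ℝ) (hf₁meas : Measurable f₁)
    (hf₁nonneg : ∀ t ∈ Set.Icc (0 : ℝ) 1, 0 ≤ f₁ t)
    (f : ℝ → ℝ) (hf : f = fun t => π₀ + (1 - π₀) * f₁ t)
    (hpos : 0 < ∫ t in (0 : ℝ)..α, μ t * f t)
    (ν : Measure (Fin 2 × ℝ × Fin 2))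
    (hν : ν = ((Measure.count : Measure (Fin 2)).prod
        (((volume.restrict (Set.Icc (0 : ℝ) 1)).prod
          (Measure.count : Measure (Fin 2))))).withDensity
        (fun x => ENNReal.ofReal
          (((if x.1 = 0 then π₀ else (1 - π₀) * f₁ x.2.1)) *
            (if x.2.2 = 1 then c * μ x.2.1 else 1 - c * μ x.2.1))))
    (m : ℕ) (hm : 0 < m)
    (X : Fin m → Ω → Fin 2 × ℝ × Fin 2)
    (hXmeas : ∀ i, Measurable (X i))
    (hindep : iIndepFun X Pr)
    (hlaw : ∀ i, Measure.map (X i) Pr = ν) :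
    (∫ ω, (α / (α - lam)) *
        ((∑ i, (if lam < (X i ω).2.1 ∧ (X i ω).2.1 ≤ α ∧ (X i ω).2.2 = 1
            then (1 : ℝ) else 0)) /
          (∑ i, (if 0 ≤ (X i ω).2.1 ∧ (X i ω).2.1 ≤ α ∧ (X i ω).2.2 = 1
            then (1 : ℝ) else 0)))
        ∂(ProbabilityTheory.cond Pr
          {ω | 0 < ∑ i, (if 0 ≤ (X i ω).2.1 ∧ (X i ω).2.1 ≤ α ∧ (X i ω).2.2 = 1
            then (1 : ℝ) else 0)}))
      - (ProbabilityTheory.cond Pr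
          {ω | (X ⟨0, hm⟩ ω).2.2 = 1 ∧ (X ⟨0, hm⟩ ω).2.1 ≤ α}
          {ω | (X ⟨0, hm⟩ ω).1 = 0}).toReal
      = ((α / (α - lam)) * (∫ t in lam..α, μ t * f t)
          - π₀ * (∫ t in (0 : ℝ)..α, μ t)) /
        (∫ t in (0 : ℝ)..α, μ t * f t) := by
  obtain ⟨hπ₀, hπ₁⟩ := hπ
  have hν' : ν = selectionLaw π₀ c μ f₁ := hν
  have hf' : f = mixtureDensity π₀ f₁ := hf
  subst hν' hf'
  have : Nonempty (Fin m) := ⟨⟨0, hm⟩⟩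
  have hα₀ : 0 ≤ α := hlam.trans hla.le
  have hselected := selectionLaw_real_selected_Icc hπ₀.le hπ₁.le hc.le hμmeas hf₁meas
    hμnonneg hf₁nonneg hα₀ hα.le
  have hselected0 : selectionLaw π₀ c μ f₁ {x | 0 ≤ x.2.1 ∧ x.2.1 ≤ α ∧ x.2.2 = 1} ≠ 0 :=
    fun h0 => (mul_pos hc hpos).ne' (by rw [← hselected, measureReal_def, h0, ENNReal.toReal_zero])
  have hnull : (Pr[{ω | (X ⟨0, hm⟩ ω).1 = 0} |
      {ω | (X ⟨0, hm⟩ ω).2.2 = 1 ∧ (X ⟨0, hm⟩ ω).2.1 ≤ α}]).toReal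
      = π₀ * c * (∫ t in 0..α, μ t) / (c * ∫ t in 0..α, μ t * mixtureDensity π₀ f₁ t) := by
    refine (toReal_cond_preimage (hXmeas ⟨0, hm⟩) (s := {x | x.2.2 = 1 ∧ x.2.1 ≤ α})
      (t := {x | x.1 = 0}) (by measurability) (by measurability)).trans ?_
    rw [hlaw, selectionLaw_real_null_selected_Iic hπ₀.le hc.le hμmeas hf₁meas hμnonneg hα₀ hα.le,
      selectionLaw_real_selected_Iic hπ₀.le hπ₁.le hc.le hμmeas hf₁meas hμnonneg hf₁nonneg hα₀
        hα.le]
  rw [integral_const_mul, integral_cond_sum_ite_div_sum_ite hindep hXmeas hlaw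
      (p := fun x => lam < x.2.1 ∧ x.2.1 ≤ α ∧ x.2.2 = 1) (by measurability) (by measurability)
      (fun x hx => ⟨hlam.trans hx.1.le, hx.2⟩) hselected0,
    selectionLaw_real_selected_Ioc hπ₀.le hπ₁.le hc.le hμmeas hf₁meas hμnonneg hf₁nonneg hlam
      hla.le hα.le, hselected, hnull]
  field_simp

/-- **Theorem 2 of the paper: bias of the post-selection FDR estimator.**
For i.i.d. triples `(Hᵢ, Pᵢ, δᵢ)` with common law `ν` (mixture model with prior null
probability `π₀`, alternative density `f₁`, selection model `Pr(δ=1∣P=p)=c·μ(p)`),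
the bias of `FDR̂ = (α/(α−λ)) ∑ 1_{(λ,α]}(Pᵢ)δᵢ / ∑ 1_{[0,α]}(Pᵢ)δᵢ` equals
`[(α/(α−λ)) ∫_λ^α μ f − π₀ ∫₀^α μ] / ∫₀^α μ f`. -/
theorem bias_fdr_estimator
    {Ω : Type*} [MeasurableSpace Ω] (Pr : Measure Ω) [IsProbabilityMeasure Pr]
    (π₀ lam α c : ℝ) (hπ : π₀ ∈ Set.Ioo (0 : ℝ) 1)
    (hlam : 0 ≤ lam) (hla : lam < α) (hα : α < 1) (hc : 0 < c)
    (μ : ℝ → ℝ) (hμmeas : Measurable μ)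
    (hμnonneg : ∀ p ∈ Set.Icc (0 : ℝ) 1, 0 ≤ μ p)
    (hμanti : AntitoneOn μ (Set.Icc (0 : ℝ) 1))
    (hcμ : ∀ p ∈ Set.Icc (0 : ℝ) 1, c * μ p ≤ 1)
    (f₁ : ℝ → ℝ) (hf₁meas : Measurable f₁)
    (hf₁nonneg : ∀ t ∈ Set.Icc (0 : ℝ) 1, 0 ≤ f₁ t)
    (hf₁int : ∫ t in (0 : ℝ)..1, f₁ t = 1)
    (f : ℝ → ℝ) (hf : f = fun t => π₀ + (1 - π₀) * f₁ t)
    (hpos : 0 < ∫ t in (0 : ℝ)..α, μ t * f t)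
    (ν : Measure (Fin 2 × ℝ × Fin 2))
    (hν : ν = ((Measure.count : Measure (Fin 2)).prod
        (((volume.restrict (Set.Icc (0 : ℝ) 1)).prod
          (Measure.count : Measure (Fin 2))))).withDensity
        (fun x => ENNReal.ofReal
          (((if x.1 = 0 then π₀ else (1 - π₀) * f₁ x.2.1)) *
            (if x.2.2 = 1 then c * μ x.2.1 else 1 - c * μ x.2.1))))
    (m : ℕ) (hm : 0 < m)
    (X : Fin m → Ω → Fin 2 × ℝ × Fin 2)
    (hXmeas : ∀ i, Measurable (X i))
    (hindep : iIndepFun X Pr)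
    (hlaw : ∀ i, Measure.map (X i) Pr = ν) :
    (∫ ω, (α / (α - lam)) *
        ((∑ i, (if lam < (X i ω).2.1 ∧ (X i ω).2.1 ≤ α ∧ (X i ω).2.2 = 1
            then (1 : ℝ) else 0)) /
          (∑ i, (if 0 ≤ (X i ω).2.1 ∧ (X i ω).2.1 ≤ α ∧ (X i ω).2.2 = 1
            then (1 : ℝ) else 0)))
        ∂(ProbabilityTheory.cond Pr
          {ω | 0 < ∑ i, (if 0 ≤ (X i ω).2.1 ∧ (X i ω).2.1 ≤ α ∧ (X i ω).2.2 = 1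
            then (1 : ℝ) else 0)}))
      - (ProbabilityTheory.cond Pr
          {ω | (X ⟨0, hm⟩ ω).2.2 = 1 ∧ (X ⟨0, hm⟩ ω).2.1 ≤ α}
          {ω | (X ⟨0, hm⟩ ω).1 = 0}).toReal
      = ((α / (α - lam)) * (∫ t in lam..α, μ t * f t)
          - π₀ * (∫ t in (0 : ℝ)..α, μ t)) /
        (∫ t in (0 : ℝ)..α, μ t * f t) :=
  bias_fdr_estimator_general Pr π₀ lam α c hπ hlam hla hα hc μ hμmeas hμnonneg f₁ hf₁meas hf₁nonneg
    f hf hpos ν hν m hm X hXmeas hindep hlaw
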